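/- Let v ∈ ℂⁿ be nonzero and set ξ = v v†. Then for every n ≥ 1 and every n×n complex matrix ζ, the vector ad(ξ)ⁿ(ζ)·v equals (-|v|²)ⁿ · ζv - (-|v|²)ⁿ · ( (v†ζv)/|v|² ) · v, where ad(ξ)(ζ) = ξζ - ζξ and v†ζv = Σ_{j,k} conj(v_j) ζ_{jk} v_k ∈ ℂ. -/
import Mathlib


open Matrix in
theorem ad_pow_vvdag_mulVec (n m : ℕ) (v : Fin m → ℂ) (hv : v ≠ 0) (hn : 1 ≤ n)
    (ζ : Matrix (Fin m) (Fin m) ℂ) :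
    let ξ : Matrix (Fin m) (Fin m) ℂ := Matrix.of fun j k => v j * (starRingEnd ℂ) (v k)
    let nv2 : ℂ := ∑ j, v j * (starRingEnd ℂ) (v j)
    (fun z => ξ * z - z * ξ)^[n] ζ *ᵥ v =
      (-nv2) ^ n • (ζ *ᵥ v) -
        ((-nv2) ^ n * ((∑ j, ∑ k, (starRingEnd ℂ) (v j) * ζ j k * v k) / nv2)) • v := by
  intro ξ nv2
  have hnv2 : nv2 ≠ 0 := by
    have h1 : nv2 = ((∑ j, Complex.normSq (v j) : ℝ) : ℂ) := by
      push_cast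
      exact Finset.sum_congr rfl fun j _ => (Complex.mul_conj (v j))
    rw [h1]
    have hpos : 0 < ∑ j, Complex.normSq (v j) := by
      obtain ⟨j, hj⟩ := Function.ne_iff.mp hv
      refine Finset.sum_pos' (fun k _ => Complex.normSq_nonneg _) ⟨j, Finset.mem_univ j, ?_⟩
      simpa [Complex.normSq_pos] using hj
    exact_mod_cast hpos.ne'
  have hξu : ∀ u : Fin m → ℂ, ξ *ᵥ u = (∑ k, (starRingEnd ℂ) (v k) * u k) • v := by
    intro u; funext j
    simp only [mulVec, dotProduct, Matrix.of_apply, Pi.smul_apply, smul_eq_mul,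
      Finset.sum_mul]
    exact Finset.sum_congr rfl fun k _ => by
      show v j * (starRingEnd ℂ) (v k) * u k = (starRingEnd ℂ) (v k) * u k * v j
      ring
  have hξv : ξ *ᵥ v = nv2 • v := by
    rw [hξu]; congr 1; exact Finset.sum_congr rfl fun k _ => mul_comm _ _
  have hξw : ξ *ᵥ (ζ *ᵥ v) =
      (∑ j, ∑ k, (starRingEnd ℂ) (v j) * ζ j k * v k) • v := by
    rw [hξu]; congr 1
    refine Finset.sum_congr rfl fun j _ => ?_
    simp only [mulVec, dotProduct, Finset.mul_sum]
    exact Finset.sum_congr rfl fun k _ => by ring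
  set c : ℂ := ∑ j, ∑ k, (starRingEnd ℂ) (v j) * ζ j k * v k with hc
  induction n, hn using Nat.le_induction with
  | base =>
    rw [Function.iterate_one, sub_mulVec, ← mulVec_mulVec, ← mulVec_mulVec, hξw, hξv,
      mulVec_smul]
    match_scalars <;> field_simp
  | succ n hn ih =>
    rw [Function.iterate_succ_apply', sub_mulVec, ← mulVec_mulVec, ← mulVec_mulVec, ih,
      hξv, mulVec_smul, ih]
    rw [mulVec_sub, mulVec_smul, mulVec_smul, hξw, hξv]
    match_scalars <;> field_simp <;> ring
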